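/- arXiv:1210.6521 — 3 statements merged into one kernel-verified Lean document; each statement's English description precedes it below -/
import Mathlib

section
/- C_{∞P}(X) = C^P(X) if and only if every closed F-CG_δ subset of X belongs to the filter F. -/
/-- `A` is an `F`-`CG_δ` set for the filter generated by the open filter base `P`. -/
def IsFCGdelta {X : Type*} [TopologicalSpace X] (P : Set (Set X)) (A : Set X) : Prop :=
  ∃ B : ℕ → Set X, A = ⋂ i, B i ∧ (∀ i, IsOpen (B i)) ∧
    (∀ i, ∃ Q ∈ P, Q ⊆ B i) ∧
    ∀ i, ∃ g : ContinuousMap X ℝ,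
      (∀ x ∈ closure (B (i + 1)), g x = 0) ∧ ∀ x ∉ B i, g x = 1

/-!
If `C_{∞P}(X) = C^P(X)` and `A = ⋂ Bᵢ` is an `F`-`CG_δ` set with separating functions `gᵢ`, then
`f = ∑ 2⁻ⁱ min (|gᵢ|, 1)` is below `2 * 2⁻ᴺ` on any member of `F` inside `B₁ ∩ ⋯ ∩ B_N`, so `f`
lies in `C_{∞P}(X) = C^P(X)`, and `Z(f) ⊆ A` because `f` vanishes only where every `gᵢ` does.
Conversely, for `f ∈ C_{∞P}(X)` the zero set `Z(f) = ⋂ {|f| < 1 / (n + 1)}` is itself an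
`F`-`CG_δ` set, consecutive levels of `|f|` being separated by a clamped affine function of `|f|`.
-/

open Set

section GeometricWeights

variable {a : ℕ → ℝ}

lemma summable_inv_two_pow : Summable fun i : ℕ => (2 : ℝ)⁻¹ ^ i :=
  summable_geometric_of_lt_one (by norm_num) (by norm_num)

lemma summable_inv_two_pow_mul (ha : ∀ i, a i ∈ Icc 0 1) :
    Summable fun i => (2 : ℝ)⁻¹ ^ i * a i :=
  summable_inv_two_pow.of_nonneg_of_le (fun i => mul_nonneg (by positivity) (ha i).1)
    fun i => mul_le_of_le_one_right (by positivity) (ha i).2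

lemma tsum_inv_two_pow_mul_eq_zero_iff (ha : ∀ i, a i ∈ Icc 0 1) :
    ∑' i, (2 : ℝ)⁻¹ ^ i * a i = 0 ↔ ∀ i, a i = 0 := by
  rw [← (summable_inv_two_pow_mul ha).hasSum_iff,
    hasSum_zero_iff_of_nonneg fun i => mul_nonneg (by positivity) (ha i).1, funext_iff]
  simp

lemma tsum_inv_two_pow_mul_le (ha : ∀ i, a i ∈ Icc 0 1) {N : ℕ} (hN : ∀ i < N, a i = 0) :
    ∑' i, (2 : ℝ)⁻¹ ^ i * a i ≤ 2 * 2⁻¹ ^ N := by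
  rw [← tsum_geometric_inv_two_ge N]
  refine (summable_inv_two_pow_mul ha).tsum_le_tsum (fun i => ?_) ?_
  · split_ifs with hi
    · exact mul_le_of_le_one_right (by positivity) (ha i).2
    · simp [hN i (not_le.1 hi)]
  · exact summable_inv_two_pow.of_nonneg_of_le (fun i => by split_ifs <;> positivity)
      fun i => by split_ifs <;> simp

lemma continuous_tsum_inv_two_pow_mul {X : Type*} [TopologicalSpace X] {h : ℕ → X → ℝ}
    (hc : ∀ i, Continuous (h i)) (hh : ∀ i x, h i x ∈ Icc 0 1) :
    Continuous fun x => ∑' i, (2 : ℝ)⁻¹ ^ i * h i x := by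
  refine continuous_tsum (fun i => continuous_const.mul (hc i)) summable_inv_two_pow fun i x => ?_
  rw [Real.norm_eq_abs, abs_of_nonneg (mul_nonneg (by positivity) (hh i x).1)]
  exact mul_le_of_le_one_right (by positivity) (hh i x).2

end GeometricWeights

lemma exists_mem_subset_of_forall_lt {X : Type*} {P : Set (Set X)} (hne : P.Nonempty)
    (hbase : ∀ A ∈ P, ∀ B ∈ P, ∃ C ∈ P, C ⊆ A ∩ B) {S : ℕ → Set X}
    (hS : ∀ i, ∃ Q ∈ P, Q ⊆ S i) (N : ℕ) : ∃ Q ∈ P, ∀ i < N, Q ⊆ S i := by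
  have hP : Filter.IsBasis (· ∈ P) id := ⟨hne, fun hA hB => hbase _ hA _ hB⟩
  obtain ⟨Q, hQ, hQS⟩ := hP.mem_filter_iff.1 <|
    (Filter.biInter_mem (Set.finite_lt_nat N)).2 fun i _ => hP.mem_filter_iff.2 (hS i)
  exact ⟨Q, hQ, fun i hi => hQS.trans (biInter_subset_of_mem hi)⟩

lemma iInter_abs_lt_one_div_eq {X : Type*} (f : X → ℝ) :
    ⋂ n : ℕ, {x | |f x| < 1 / (n + 1)} = {x | f x = 0} := by
  ext x
  simp only [mem_iInter, mem_ofPred_eq]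
  refine ⟨fun h => ?_, fun h n => by simp [h, Nat.cast_add_one_pos]⟩
  by_contra hx
  obtain ⟨n, hn⟩ := exists_nat_one_div_lt (abs_pos.2 hx)
  exact (h n).not_gt hn

lemma exists_continuousMap_eq_zero_eq_one_of_lt {X : Type*} [TopologicalSpace X] {u : X → ℝ}
    (hu : Continuous u) {a b : ℝ} (hab : a < b) :
    ∃ g : C(X, ℝ), (∀ x, u x ≤ a → g x = 0) ∧ ∀ x, b ≤ u x → g x = 1 := by
  refine ⟨⟨fun x => min 1 (max 0 ((u x - a) / (b - a))), by fun_prop⟩, fun x hx => ?_,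
    fun x hx => ?_⟩
  · have : (u x - a) / (b - a) ≤ 0 := div_nonpos_of_nonpos_of_nonneg (by linarith) (by linarith)
    simp [max_eq_left this]
  · have : 1 ≤ (u x - a) / (b - a) := (one_le_div (by linarith)).2 (by linarith)
    simp [min_eq_left (le_max_of_le_right this)]

section FCGdelta

variable {X : Type*} [TopologicalSpace X] {P : Set (Set X)}

lemma isFCGdelta_setOf_eq_zero {f : C(X, ℝ)}
    (hf : ∀ n : ℕ, ∃ Q ∈ P, Q ⊆ {x | |f x| < 1 / (n + 1)}) : IsFCGdelta P {x | f x = 0} := by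
  refine ⟨fun n => {x | |f x| < 1 / (n + 1)}, (iInter_abs_lt_one_div_eq f).symm,
    fun n => isOpen_lt (by fun_prop) continuous_const, hf, fun n => ?_⟩
  obtain ⟨g, hg0, hg1⟩ := exists_continuousMap_eq_zero_eq_one_of_lt (u := fun x => |f x|)
    (by fun_prop) (one_div_lt_one_div_of_lt (Nat.cast_add_one_pos n) (lt_add_one ((n : ℝ) + 1)))
  refine ⟨g, fun x hx => hg0 x ?_, fun x hx => hg1 x (not_lt.1 hx)⟩
  simpa using closure_lt_subset_le (by fun_prop) continuous_const hx

lemma exists_mem_subset_of_isFCGdelta (hne : P.Nonempty)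
    (hbase : ∀ A ∈ P, ∀ B ∈ P, ∃ C ∈ P, C ⊆ A ∩ B)
    (hP : ∀ f : C(X, ℝ), (∀ n : ℕ, ∃ Q ∈ P, Q ⊆ {x | |f x| < 1 / (n + 1)}) →
      ∃ Q ∈ P, Q ⊆ {x | f x = 0})
    {A : Set X} (hA : IsFCGdelta P A) : ∃ Q ∈ P, Q ⊆ A := by
  obtain ⟨B, rfl, -, hBP, hsep⟩ := hA
  choose g hg0 hg1 using hsep
  set h : ℕ → X → ℝ := fun i x => min |g i x| 1
  have hh : ∀ i x, h i x ∈ Icc 0 1 := fun i x =>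
    ⟨le_min (abs_nonneg _) zero_le_one, min_le_right _ _⟩
  let f : C(X, ℝ) := ⟨fun x => ∑' i, (2 : ℝ)⁻¹ ^ i * h i x,
    continuous_tsum_inv_two_pow_mul (fun i => by fun_prop) hh⟩
  have hf : ∀ n : ℕ, ∃ Q ∈ P, Q ⊆ {x | |f x| < 1 / (n + 1)} := by
    intro n
    obtain ⟨N, hN⟩ := exists_pow_lt_of_lt_one (x := 1 / ((n : ℝ) + 1) / 2) (by positivity)
      (inv_lt_one_of_one_lt₀ one_lt_two)
    obtain ⟨Q, hQ, hQB⟩ := exists_mem_subset_of_forall_lt hne hbase (fun i => hBP (i + 1)) N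
    refine ⟨Q, hQ, fun x hx => ?_⟩
    have hfx : f x ≤ 2 * 2⁻¹ ^ N := tsum_inv_two_pow_mul_le (hh · x) fun i hi => by
      simp [h, hg0 i x (subset_closure (hQB i hi hx))]
    have hf0 : 0 ≤ f x := tsum_nonneg fun i => mul_nonneg (by positivity) (hh i x).1
    show |f x| < 1 / ((n : ℝ) + 1)
    exact abs_lt.2 ⟨by linarith [Nat.one_div_pos_of_nat (α := ℝ) (n := n)], by linarith⟩
  obtain ⟨Q, hQ, hQf⟩ := hP f hf
  refine ⟨Q, hQ, fun x hx => mem_iInter.2 fun i => ?_⟩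
  by_contra hxB
  have := (tsum_inv_two_pow_mul_eq_zero_iff (hh · x)).1 (hQf hx) i
  simp [h, hg1 i x hxB] at this

end FCGdelta

theorem cInfP_eq_cP_iff_general {X : Type*} [TopologicalSpace X]
    (P : Set (Set X)) (hne : P.Nonempty)
    (hbase : ∀ A ∈ P, ∀ B ∈ P, ∃ C ∈ P, C ⊆ A ∩ B) :
    ({f : ContinuousMap X ℝ | ∀ n : ℕ, ∃ Q ∈ P, Q ⊆ {x | |f x| < 1 / (n + 1)}} =
      {f : ContinuousMap X ℝ | ∃ Q ∈ P, Q ⊆ {x | f x = 0}}) ↔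
    (∀ A : Set X, IsClosed A → IsFCGdelta P A → ∃ Q ∈ P, Q ⊆ A) := by
  have hCP_subset : {f : ContinuousMap X ℝ | ∃ Q ∈ P, Q ⊆ {x | f x = 0}} ⊆
      {f : ContinuousMap X ℝ | ∀ n : ℕ, ∃ Q ∈ P, Q ⊆ {x | |f x| < 1 / (n + 1)}} :=
    fun f ⟨Q, hQ, hQf⟩ n => ⟨Q, hQ, fun x hx => by
      simp [show f x = 0 from hQf hx, Nat.cast_add_one_pos]⟩
  rw [Subset.antisymm_iff, and_iff_left hCP_subset]
  exact ⟨fun h _ _ hA => exists_mem_subset_of_isFCGdelta hne hbase (fun _ hf => h hf) hA,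
    fun h f hf => h _ (isClosed_eq f.continuous continuous_const) (isFCGdelta_setOf_eq_zero hf)⟩

/-- `C_{∞P}(X) = C^P(X)` iff every closed `F`-`CG_δ` set belongs to `F`. -/
theorem cInfP_eq_cP_iff {X : Type*} [TopologicalSpace X] [T2Space X]
    [CompletelyRegularSpace X]
    (P : Set (Set X)) (hne : P.Nonempty)
    (hopen : ∀ A ∈ P, IsOpen A) (hAne : ∀ A ∈ P, A.Nonempty)
    (hbase : ∀ A ∈ P, ∀ B ∈ P, ∃ C ∈ P, C ⊆ A ∩ B) :
    ({f : ContinuousMap X ℝ | ∀ n : ℕ, ∃ Q ∈ P, Q ⊆ {x | |f x| < 1 / (n + 1)}} =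
      {f : ContinuousMap X ℝ | ∃ Q ∈ P, Q ⊆ {x | f x = 0}}) ↔
    (∀ A : Set X, IsClosed A → IsFCGdelta P A → ∃ Q ∈ P, Q ⊆ A) :=
  cInfP_eq_cP_iff_general P hne hbase
end

section
/- If X is pseudocompact, then for every open filter base P on X, C_{∞P}(X) is an ideal of C(X). -/
/-!
`C_{∞P}(X)` is the set of continuous functions tending to `0` along the filter generated by `P`.
Sums of such functions tend to `0`, and since `X` is pseudocompact every multiplier is bounded,
so bounded-times-null is null as well.
-/

open Filter Topology

namespace ContinuousMap

variable {X R : Type*} [TopologicalSpace X] [SeminormedRing R]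

def tendstoZeroIdeal (l : Filter X) (hbdd : ∀ f : C(X, R), ∃ M : ℝ, ∀ x, ‖f x‖ ≤ M) :
    Ideal C(X, R) where
  carrier := {f | Tendsto (⇑f) l (𝓝 0)}
  zero_mem' := tendsto_const_nhds
  add_mem' {f g} hf hg := by
    simpa only [Set.mem_ofPred_eq, coe_add, Pi.add_def, add_zero] using hf.add hg
  smul_mem' c f hf := by
    obtain ⟨M, hM⟩ := hbdd c
    exact isBoundedUnder_le_mul_tendsto_zero ⟨M, eventually_map.2 (.of_forall hM)⟩ hf

theorem coe_tendstoZeroIdeal (l : Filter X) (hbdd : ∀ f : C(X, R), ∃ M : ℝ, ∀ x, ‖f x‖ ≤ M) :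
    (tendstoZeroIdeal l hbdd : Set C(X, R)) = {f : C(X, R) | Tendsto (⇑f) l (𝓝 0)} :=
  rfl

end ContinuousMap

theorem Real.tendsto_nhds_zero_iff_forall_nat {ι : Type*} {l : Filter ι} {u : ι → ℝ} :
    Tendsto u l (𝓝 0) ↔ ∀ n : ℕ, ∀ᶠ i in l, |u i| < 1 / (n + 1) := by
  simp [Metric.nhds_basis_ball_inv_nat_succ.tendsto_right_iff]

theorem pseudocompact_cInfP_ideal_general {X : Type*} [TopologicalSpace X]
    (hpc : ∀ f : ContinuousMap X ℝ, ∃ M : ℝ, ∀ x, |f x| ≤ M)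
    (P : Set (Set X)) (hne : P.Nonempty)
    (hbase : ∀ A ∈ P, ∀ B ∈ P, ∃ C ∈ P, C ⊆ A ∩ B) :
    ∃ I : Ideal (ContinuousMap X ℝ), (I : Set (ContinuousMap X ℝ)) =
      {f : ContinuousMap X ℝ | ∀ n : ℕ, ∃ Q ∈ P, Q ⊆ {x | |f x| < (1 : ℝ) / (n + 1)}} := by
  let B : FilterBasis X := ⟨P, hne, fun hA hB => hbase _ hA _ hB⟩
  refine ⟨ContinuousMap.tendstoZeroIdeal B.filter (by simpa only [Real.norm_eq_abs] using hpc), ?_⟩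
  ext f
  simp only [ContinuousMap.coe_tendstoZeroIdeal, Set.mem_ofPred_eq,
    Real.tendsto_nhds_zero_iff_forall_nat, Filter.Eventually, B.mem_filter_iff]
  rfl

/-- if `X` is pseudocompact then `C_{∞P}(X)` is an ideal of `C(X)` for every
open filter base `P`. -/
theorem pseudocompact_cInfP_ideal {X : Type*} [TopologicalSpace X] [T2Space X]
    [CompletelyRegularSpace X]
    (hpc : ∀ f : ContinuousMap X ℝ, ∃ M : ℝ, ∀ x, |f x| ≤ M)
    (P : Set (Set X)) (hne : P.Nonempty)
    (hopen : ∀ A ∈ P, IsOpen A) (hAne : ∀ A ∈ P, A.Nonempty)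
    (hbase : ∀ A ∈ P, ∀ B ∈ P, ∃ C ∈ P, C ⊆ A ∩ B) :
    ∃ I : Ideal (ContinuousMap X ℝ), (I : Set (ContinuousMap X ℝ)) =
      {f : ContinuousMap X ℝ | ∀ n : ℕ, ∃ Q ∈ P, Q ⊆ {x | |f x| < (1 : ℝ) / (n + 1)}} :=
  pseudocompact_cInfP_ideal_general hpc P hne hbase
end

section
/- Let X be infinite and P = {A ⊊ X : X∖A finite}. Then C_{∞P}(X) is an ideal of C(X) if and only if the set of isolated points of X is bounded (relatively pseudocompact). -/
/-!
For infinite `X`, membership in `C_{∞P}(X)` says exactly that `f → 0` along the cofinite filter.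
Since `𝓝[≠] x ≤ cofinite` in a T₁ space, such a continuous `f` vanishes at every non-isolated
point; conversely, a function tending to `0` along the cofinite filter and supported on isolated
points is continuous. So if `|g| ≤ M` on the isolated points then `|g f| ≤ M |f|` and
`g f ∈ C_{∞P}(X)`. If `g` is unbounded there, pick isolated `xₙ` with `n < |g xₙ|`: the function
equal to `1 / g` on `{xₙ}` and `0` elsewhere lies in `C_{∞P}(X)`, but its product with `g` is `1`
on the infinite set `{xₙ}`.
-/

open Set Filter Topology Function

theorem exists_proper_cofinite_subset_iff {X : Type*} [Infinite X] {s : Set X} :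
    (∃ A ∈ {A : Set X | A ≠ univ ∧ Aᶜ.Finite}, A ⊆ s) ↔ s ∈ cofinite := by
  constructor
  · rintro ⟨A, ⟨-, hA⟩, hAs⟩
    exact mem_cofinite.mpr (hA.subset (compl_subset_compl.mpr hAs))
  · intro hs
    obtain ⟨p, -⟩ := Filter.nonempty_of_mem hs
    refine ⟨s \ {p}, ⟨fun h => ?_, ?_⟩, sdiff_subset⟩
    · exact (h.symm ▸ mem_univ p : p ∈ s \ {p}).2 rfl
    · rw [sdiff_eq, compl_inter, compl_compl]
      exact (mem_cofinite.mp hs).union (finite_singleton p)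

theorem tendsto_zero_iff_forall_eventually_abs_lt_one_div_succ {α : Type*} {l : Filter α}
    {f : α → ℝ} : Tendsto f l (𝓝 0) ↔ ∀ n : ℕ, ∀ᶠ x in l, |f x| < 1 / (n + 1) := by
  simp [Metric.nhds_basis_ball_inv_nat_succ.tendsto_right_iff]

theorem continuous_iff_forall_ne_zero_isOpen_singleton {X Y : Type*} [TopologicalSpace X]
    [T1Space X] [TopologicalSpace Y] [T2Space Y] [Zero Y] {f : X → Y}
    (hf : Tendsto f cofinite (𝓝 0)) :
    Continuous f ↔ ∀ x, f x ≠ 0 → IsOpen ({x} : Set X) := by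
  have hpunct (x : X) : Tendsto f (𝓝[≠] x) (𝓝 0) := hf.mono_left (nhdsNE_le_cofinite x)
  refine ⟨fun hcont x hx => ?_, fun hiso => continuous_iff_continuousAt.mpr fun x => ?_⟩
  · by_contra hx'
    have : (𝓝[≠] x).NeBot := ⟨mt (isOpen_singleton_iff_punctured_nhds x).mpr hx'⟩
    exact hx (tendsto_nhds_unique (hcont.continuousAt.tendsto.mono_left nhdsWithin_le_nhds)
      (hpunct x))
  · by_cases hx : f x = 0
    · rw [← continuousWithinAt_compl_self, ContinuousWithinAt, hx]
      exact hpunct x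
    · rw [ContinuousAt, (isOpen_singleton_iff_nhds_eq_pure x).mp (hiso x hx)]
      exact tendsto_pure_nhds f x

theorem tendsto_cofinite_of_support_subset_range {ι X Y : Type*} [TopologicalSpace Y] [Zero Y]
    {f : X → Y} {x : ι → X} (hsupp : support f ⊆ range x)
    (hf : Tendsto (f ∘ x) cofinite (𝓝 0)) : Tendsto f cofinite (𝓝 0) := by
  intro U hU
  refine mem_cofinite.mpr <| ((mem_cofinite.mp (hf hU)).image x).subset fun y hy => ?_
  have hy0 : f y ≠ 0 := fun h => hy (show f y ∈ U from h ▸ mem_of_mem_nhds hU)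
  obtain ⟨i, rfl⟩ := hsupp hy0
  exact mem_image_of_mem x hy

theorem tendsto_mul_zero_of_norm_le_on_support {α R : Type*} [NonUnitalSeminormedRing R]
    {l : Filter α} {f g : α → R} {M : ℝ} (hf : Tendsto f l (𝓝 0))
    (hg : ∀ x, f x ≠ 0 → ‖g x‖ ≤ M) : Tendsto (g * f) l (𝓝 0) := by
  have hMf : Tendsto (fun x => M * ‖f x‖) l (𝓝 0) := by
    simpa using (tendsto_zero_iff_norm_tendsto_zero.mp hf).const_mul M
  refine squeeze_zero_norm (fun x => ?_) hMf
  by_cases hx : f x = 0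
  · simp [hx]
  · exact (norm_mul_le _ _).trans (mul_le_mul_of_nonneg_right (hg x hx) (norm_nonneg _))

theorem exists_ideal_coe_eq_iff {R : Type*} [Semiring R] (S : AddSubmonoid R) :
    (∃ I : Ideal R, (I : Set R) = S) ↔ ∀ r, ∀ s ∈ S, r * s ∈ S :=
  ⟨fun ⟨I, hI⟩ r s hs => by rw [← SetLike.mem_coe, ← hI] at hs ⊢; exact I.mul_mem_left r hs,
    fun h => ⟨{ S with smul_mem' := h }, rfl⟩⟩

namespace ContinuousMap

variable (X : Type*) [TopologicalSpace X]

def cofiniteNull : AddSubmonoid C(X, ℝ) where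
  carrier := {f | Tendsto f cofinite (𝓝 0)}
  add_mem' hf hg := by rw [← add_zero (0 : ℝ)]; exact hf.add hg
  zero_mem' := tendsto_const_nhds

variable {X} [T1Space X]

theorem mul_mem_cofiniteNull_of_bounded {f g : C(X, ℝ)} {M : ℝ}
    (hg : ∀ x ∈ {x : X | IsOpen ({x} : Set X)}, |g x| ≤ M) (hf : f ∈ cofiniteNull X) :
    g * f ∈ cofiniteNull X :=
  tendsto_mul_zero_of_norm_le_on_support hf fun x hx =>
    hg x ((continuous_iff_forall_ne_zero_isOpen_singleton hf).mp f.continuous x hx)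

theorem exists_mem_cofiniteNull_mul_notMem {g : C(X, ℝ)} {x : ℕ → X}
    (hiso : ∀ n, IsOpen ({x n} : Set X)) (hgx : ∀ n : ℕ, (n : ℝ) < |g (x n)|) :
    ∃ f ∈ cofiniteNull X, g * f ∉ cofiniteNull X := by
  set φ : X → ℝ := (range x).indicator fun y => (g y)⁻¹
  have hsupp : support φ ⊆ range x := support_indicator_subset
  have hφx (n : ℕ) : φ (x n) = (g (x n))⁻¹ := indicator_of_mem (mem_range_self n) _
  have hφ : Tendsto φ cofinite (𝓝 0) := by
    refine tendsto_cofinite_of_support_subset_range hsupp ?_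
    have hgx_top : Tendsto (fun n => |g (x n)|) atTop atTop :=
      tendsto_atTop_mono (fun n => (hgx n).le) tendsto_natCast_atTop_atTop
    rw [Nat.cofinite_eq_atTop, tendsto_zero_iff_norm_tendsto_zero]
    simpa [comp_def, hφx, Pi.inv_def] using hgx_top.inv_tendsto_atTop
  have hcont : Continuous φ := (continuous_iff_forall_ne_zero_isOpen_singleton hφ).mpr
    fun y hy => by obtain ⟨n, rfl⟩ := hsupp hy; exact hiso n
  refine ⟨⟨φ, hcont⟩, hφ, fun hgφ => ?_⟩
  have hone : range x ⊆ {y | (g * ⟨φ, hcont⟩) y = 1} := by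
    rintro _ ⟨n, rfl⟩
    have : g (x n) ≠ 0 := abs_pos.mp ((Nat.cast_nonneg n).trans_lt (hgx n))
    simp [hφx, this]
  have hinf : (range x).Infinite := by
    refine Infinite.of_image (fun y => |g y|) (infinite_of_not_bddAbove ?_)
    rw [← range_comp, not_bddAbove_iff]
    exact fun M => ⟨_, mem_range_self ⌈M⌉₊, (Nat.le_ceil M).trans_lt (hgx _)⟩
  obtain ⟨y, hy1, hy2⟩ := (frequently_cofinite_iff_infinite.mpr (hinf.mono hone)).and_eventually
    (Tendsto.eventually_ne hgφ zero_ne_one) |>.exists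
  exact hy2 hy1

theorem forall_mul_mem_cofiniteNull_iff (g : C(X, ℝ)) :
    (∀ f ∈ cofiniteNull X, g * f ∈ cofiniteNull X) ↔
      ∃ M : ℝ, ∀ x ∈ {x : X | IsOpen ({x} : Set X)}, |g x| ≤ M := by
  refine ⟨fun h => ?_, fun ⟨M, hM⟩ f hf => mul_mem_cofiniteNull_of_bounded hM hf⟩
  by_contra! hunb
  choose x hiso hgx using fun n : ℕ => hunb n
  obtain ⟨f, hf, hgf⟩ := exists_mem_cofiniteNull_mul_notMem hiso hgx
  exact hgf (h f hf)

end ContinuousMap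

theorem cInfP_cofinite_ideal_iff_general {X : Type*} [TopologicalSpace X] [T2Space X]
    [Infinite X] :
    (∃ I : Ideal (ContinuousMap X ℝ), (I : Set (ContinuousMap X ℝ)) =
      {f : ContinuousMap X ℝ | ∀ n : ℕ, ∃ A ∈ {A : Set X | A ≠ Set.univ ∧ Aᶜ.Finite},
        A ⊆ {x | |f x| < (1 : ℝ) / (n + 1)}}) ↔
    (∀ f : ContinuousMap X ℝ, ∃ M : ℝ, ∀ x ∈ {x : X | IsOpen ({x} : Set X)}, |f x| ≤ M) := by
  have hcarrier : {f : C(X, ℝ) | ∀ n : ℕ, ∃ A ∈ {A : Set X | A ≠ Set.univ ∧ Aᶜ.Finite},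
      A ⊆ {x | |f x| < (1 : ℝ) / (n + 1)}} = ContinuousMap.cofiniteNull X := by
    ext f
    simp only [exists_proper_cofinite_subset_iff]
    exact tendsto_zero_iff_forall_eventually_abs_lt_one_div_succ.symm
  rw [hcarrier, exists_ideal_coe_eq_iff]
  exact forall_congr' ContinuousMap.forall_mul_mem_cofiniteNull_iff

/-- for `P` the cofinite proper subsets of an infinite space, `C_{∞P}(X)` is
an ideal of `C(X)` iff the set of isolated points is bounded (relatively pseudocompact). -/
theorem cInfP_cofinite_ideal_iff {X : Type*} [TopologicalSpace X] [T2Space X]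
    [CompletelyRegularSpace X] [Infinite X] :
    (∃ I : Ideal (ContinuousMap X ℝ), (I : Set (ContinuousMap X ℝ)) =
      {f : ContinuousMap X ℝ | ∀ n : ℕ, ∃ A ∈ {A : Set X | A ≠ Set.univ ∧ Aᶜ.Finite},
        A ⊆ {x | |f x| < (1 : ℝ) / (n + 1)}}) ↔
    (∀ f : ContinuousMap X ℝ, ∃ M : ℝ, ∀ x ∈ {x : X | IsOpen ({x} : Set X)}, |f x| ≤ M) :=
  cInfP_cofinite_ideal_iff_general
end
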